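/- arXiv:2001.03894 — 5 statements merged into one kernel-verified Lean document; each statement's English description precedes it below -/
import Mathlib

section
/- For any two languages K₁, K₂ ⊆ C* of finite words over an alphabet C, the set of infinite words all of whose finite prefixes are prefixes of words in K₁ ∪ K₂ equals the union of the set of infinite words all of whose prefixes are prefixes of words in K₁ and the set of infinite words all of whose prefixes are prefixes of words in K₂. -/
/-!
Since `prefs K` is closed under taking prefixes, an infinite word has all of its finite prefixes
in `prefs K` as soon as infinitely many of them lie there. By pigeonhole, infinitely many
prefixes lie in `prefs (K₁ ∪ K₂) = prefs K₁ ∪ prefs K₂` iff infinitely many lie in `prefs K₁` or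
infinitely many lie in `prefs K₂`.
-/

/-- The set of finite prefixes of words in a language `K`. -/
def prefs {C : Type*} (K : Set (List C)) : Set (List C) :=
  {p | ∃ w ∈ K, p <+: w}

/-- The set of infinite words all of whose finite prefixes are prefixes of words in `K`. -/
def pclos {C : Type*} (K : Set (List C)) : Set (ℕ → C) :=
  {x | ∀ n : ℕ, (List.ofFn fun i : Fin n => x i.val) ∈ prefs K}

open Filter

lemma ofFn_prefix_ofFn_of_le {C : Type*} (x : ℕ → C) {n m : ℕ} (h : n ≤ m) :
    (List.ofFn fun i : Fin n => x i.val) <+: (List.ofFn fun i : Fin m => x i.val) := by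
  obtain ⟨k, rfl⟩ := Nat.exists_eq_add_of_le h
  rw [List.ofFn_add]
  exact List.prefix_append _ _

lemma mem_prefs_of_prefix {C : Type*} {K : Set (List C)} {p q : List C}
    (hpq : p <+: q) (hq : q ∈ prefs K) : p ∈ prefs K := by
  obtain ⟨w, hw, hqw⟩ := hq
  exact ⟨w, hw, hpq.trans hqw⟩

lemma prefs_union {C : Type*} (K₁ K₂ : Set (List C)) :
    prefs (K₁ ∪ K₂) = prefs K₁ ∪ prefs K₂ := by
  ext p
  simp only [prefs, Set.mem_ofPred_eq, Set.mem_union, or_and_right, exists_or]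

lemma mem_pclos_iff_frequently {C : Type*} {K : Set (List C)} {x : ℕ → C} :
    x ∈ pclos K ↔ ∃ᶠ n in atTop, (List.ofFn fun i : Fin n => x i.val) ∈ prefs K := by
  refine ⟨fun hx => Frequently.of_forall hx, fun hx n => ?_⟩
  obtain ⟨m, hnm, hm⟩ := frequently_atTop.mp hx n
  exact mem_prefs_of_prefix (ofFn_prefix_ofFn_of_le x hnm) hm

/-- `[K₁ ∪ K₂] = [K₁] ∪ [K₂]`. -/
theorem pclos_union {C : Type*} (K₁ K₂ : Set (List C)) :
    pclos (K₁ ∪ K₂) = pclos K₁ ∪ pclos K₂ := by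
  ext x
  simp only [Set.mem_union, mem_pclos_iff_frequently, prefs_union, frequently_or_distrib]
end

section
/- In a finite non-blocking one-player arena whose edges are colored by integers, if there exists an infinite play from state s whose running sums of edge weights equal zero infinitely often, then there exists an ultimately periodic (lasso-shaped) play from s with the same property, consisting of a finite prefix with total weight zero followed by the infinite repetition of a zero-weight cycle. -/
/-!
Since the edge set is finite, two of the infinitely many zero-sum positions `k < k + p` of the
play carry the same edge, so the segment `[k, k + p)` is a cycle of weight zero. Following the play
up to `k + p` and then jumping back to position `k` forever gives a lasso; its running sum is zero
at every `k + m * p`.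
-/

/-- An infinite play from state `s` in the arena with (integer-weighted) edge
set `E`: a sequence of consecutive edges starting at `s`. -/
def isPlay {S : Type*} (E : Set (S × ℤ × S)) (s : S) (π : ℕ → S × ℤ × S) : Prop :=
  (π 0).1 = s ∧ ∀ n : ℕ, π n ∈ E ∧ (π (n + 1)).1 = (π n).2.2

/-- Running sum of the edge weights of a play after `n` steps. -/
def rsum {S : Type*} (π : ℕ → S × ℤ × S) (n : ℕ) : ℤ :=
  ∑ i ∈ Finset.range n, (π i).2.1

open Finset Function

theorem Nat.add_one_mod_eq_or {m p : ℕ} (hp : 0 < p) :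
    (m + 1) % p = m % p + 1 ∨ m % p + 1 = p ∧ (m + 1) % p = 0 := by
  obtain rfl | hp := (Nat.succ_le_of_lt hp).eq_or_lt
  · simp [Nat.mod_one]
  · have := Nat.mod_lt m (by omega : 0 < p)
    rw [Nat.add_mod_eq_ite, Nat.mod_eq_of_lt hp]
    split_ifs <;> omega

def lassoIndex (k p n : ℕ) : ℕ := if n < k then n else k + (n - k) % p

section lassoIndex

variable {k p n : ℕ}

theorem lassoIndex_of_lt (hn : n < k + p) : lassoIndex k p n = n := by
  unfold lassoIndex
  split_ifs
  · rfl
  · rw [Nat.mod_eq_of_lt (by omega)]; omega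

theorem lassoIndex_add_period (hn : k ≤ n) : lassoIndex k p (n + p) = lassoIndex k p n := by
  unfold lassoIndex
  rw [if_neg (by omega), if_neg (by omega), show n + p - k = n - k + p by omega, Nat.add_mod_right]

theorem lassoIndex_succ (hp : 0 < p) (n : ℕ) :
    lassoIndex k p (n + 1) = lassoIndex k p n + 1 ∨
      lassoIndex k p n + 1 = k + p ∧ lassoIndex k p (n + 1) = k := by
  unfold lassoIndex
  by_cases hn : n < k
  · left
    rw [if_pos hn]
    split_ifs
    · rfl
    · rw [show n + 1 - k = 0 by omega, Nat.zero_mod]; omega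
  · rw [if_neg hn, if_neg (by omega), show n + 1 - k = n - k + 1 by omega]
    rcases Nat.add_one_mod_eq_or (m := n - k) hp with h | ⟨hlast, h⟩
    · left; rw [h]; omega
    · right; rw [h]; omega

theorem rel_lassoIndex_succ {α : Type*} {R : α → α → Prop} {f : ℕ → α}
    (hf : ∀ n, R (f n) (f (n + 1))) (hp : 0 < p) (hcycle : f (k + p) = f k) (n : ℕ) :
    R (f (lassoIndex k p n)) (f (lassoIndex k p (n + 1))) := by
  rcases lassoIndex_succ hp n with h | ⟨hlast, h⟩
  · rw [h]; exact hf _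
  · rw [h, ← hcycle, ← hlast]; exact hf _

end lassoIndex

theorem Function.Periodic.sum_range_mul {M : Type*} [AddCommMonoid M] {g : ℕ → M} {p : ℕ}
    (hg : Periodic g p) (m : ℕ) : ∑ i ∈ range (m * p), g i = m • ∑ i ∈ range p, g i := by
  induction m with
  | zero => simp
  | succ m ih =>
    rw [Nat.succ_mul, sum_range_add, ih, succ_nsmul]
    congr 1
    exact sum_congr rfl fun i _ => by simpa [add_comm] using hg.nat_mul m i

section plays

variable {S : Type*} {π : ℕ → S × ℤ × S} {k p : ℕ}

theorem isPlay_comp_lassoIndex {E : Set (S × ℤ × S)} {s : S} (hπ : isPlay E s π) (hp : 0 < p)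
    (hcycle : π (k + p) = π k) : isPlay E s (π ∘ lassoIndex k p) :=
  ⟨by rw [comp_apply, lassoIndex_of_lt (by omega)]; exact hπ.1,
    fun n => ⟨(hπ.2 _).1, rel_lassoIndex_succ (R := fun e e' => e'.1 = e.2.2)
      (fun n => (hπ.2 n).2) hp hcycle n⟩⟩

theorem rsum_comp_lassoIndex_of_le {n : ℕ} (hn : n ≤ k + p) :
    rsum (π ∘ lassoIndex k p) n = rsum π n :=
  sum_congr rfl fun i hi => by rw [comp_apply, lassoIndex_of_lt (by simp at hi; omega)]

theorem rsum_add_mul_period (hπ : ∀ n, k ≤ n → π (n + p) = π n) (m : ℕ) :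
    rsum π (k + m * p) = rsum π k + m • ∑ i ∈ Ico k (k + p), (π i).2.1 := by
  have hper : Periodic (fun j => (π (k + j)).2.1) p := fun j => by
    simp only [← add_assoc, hπ _ (Nat.le_add_right k j)]
  rw [rsum, rsum, sum_range_add, hper.sum_range_mul, sum_Ico_eq_sum_range, Nat.add_sub_cancel_left]

end plays

theorem zero_sum_lasso_general {S : Type*}
    (E : Set (S × ℤ × S)) (hE : E.Finite)
    (s : S) (π : ℕ → S × ℤ × S)
    (hplay : isPlay E s π)
    (hW2 : {n : ℕ | rsum π n = 0}.Infinite) :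
    ∃ (π' : ℕ → S × ℤ × S) (k p : ℕ), 0 < p ∧
      isPlay E s π' ∧
      (∀ n : ℕ, k ≤ n → π' (n + p) = π' n) ∧
      rsum π' k = 0 ∧
      (∑ i ∈ Finset.Ico k (k + p), (π' i).2.1) = 0 ∧
      {n : ℕ | rsum π' n = 0}.Infinite := by
  obtain ⟨k, hk, l, hl, hkl, hedge⟩ :=
    hW2.exists_lt_map_eq_of_mapsTo (fun n _ => (hplay.2 n).1) hE
  obtain ⟨p, rfl⟩ : ∃ p, l = k + p := ⟨l - k, by omega⟩
  have hp : 0 < p := by omega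
  have hprefix : rsum (π ∘ lassoIndex k p) k = 0 :=
    (rsum_comp_lassoIndex_of_le (by omega)).trans hk
  have hcycle : ∑ i ∈ Ico k (k + p), ((π ∘ lassoIndex k p) i).2.1 = 0 := by
    rw [sum_Ico_eq_sub _ (by omega)]
    change rsum _ (k + p) - rsum _ k = 0
    rw [rsum_comp_lassoIndex_of_le le_rfl, rsum_comp_lassoIndex_of_le (by omega),
      Set.mem_ofPred_eq.mp hk, Set.mem_ofPred_eq.mp hl, sub_zero]
  have hperiodic : ∀ n, k ≤ n → (π ∘ lassoIndex k p) (n + p) = (π ∘ lassoIndex k p) n :=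
    fun n hn => congrArg π (lassoIndex_add_period hn)
  refine ⟨π ∘ lassoIndex k p, k, p, hp, isPlay_comp_lassoIndex hplay hp hedge.symm, hperiodic,
    hprefix, hcycle, Set.infinite_of_injective_forall_mem (f := fun m => k + m * p)
      ((add_right_injective k).comp (mul_left_injective₀ hp.ne')) fun m => ?_⟩
  rw [Set.mem_ofPred_eq, rsum_add_mul_period hperiodic, hprefix, hcycle, smul_zero, add_zero]

/-- In a finite non-blocking one-player arena with integer weights, if some
play from `s` has running sums equal to zero infinitely often, then there is
an ultimately periodic (lasso-shaped) play from `s` with the same property,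
consisting of a prefix of total weight zero followed by the infinite
repetition of a zero-weight cycle. -/
theorem zero_sum_lasso {S : Type*} [Finite S]
    (E : Set (S × ℤ × S)) (hE : E.Finite)
    (hnb : ∀ s : S, ∃ e ∈ E, e.1 = s)
    (s : S) (π : ℕ → S × ℤ × S)
    (hplay : isPlay E s π)
    (hW2 : {n : ℕ | rsum π n = 0}.Infinite) :
    ∃ (π' : ℕ → S × ℤ × S) (k p : ℕ), 0 < p ∧
      isPlay E s π' ∧
      (∀ n : ℕ, k ≤ n → π' (n + p) = π' n) ∧
      rsum π' k = 0 ∧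
      (∑ i ∈ Finset.Ico k (k + p), (π' i).2.1) = 0 ∧
      {n : ℕ | rsum π' n = 0}.Infinite :=
  zero_sum_lasso_general E hE s π hplay hW2
end

section
/- Let (cᵢ) be integers and k ≤ l be indices such that the block c_k…c_l has total sum zero, the running sum at position k−1 (sum of c₁…c_{k−1}) is nonzero, and all running sums at positions k−1 ≤ n ≤ l are nonzero. Then the infinite sequence consisting of the prefix c₁…c_{k−1} followed by the block c_k…c_l repeated forever has only finitely many positions where the running sum is zero (indeed none beyond position k−1). -/
/-!
Past the prefix, the running sum of the lasso at position `k + m` equals the running sum of `c`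
at position `k + m % p`: each completed pass through the block adds its total, which is zero.
Hence every running sum of the lasso from position `k` on is one of the running sums of `c`
at positions `k, …, k + p`, all of which are nonzero.
-/

/-- The "lasso" sequence: the first `k` entries of `c` followed by the block
of the next `p` entries of `c` repeated forever. -/
def lasso (c : ℕ → ℤ) (k p : ℕ) : ℕ → ℤ :=
  fun n => if n < k then c n else c (k + (n - k) % p)

open Finset

theorem Finset.sum_range_mod_of_sum_range_eq_zero {M : Type*} [AddCommMonoid M] (f : ℕ → M)
    {p : ℕ} (hf : ∑ j ∈ range p, f j = 0) (m : ℕ) :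
    ∑ j ∈ range m, f (j % p) = ∑ j ∈ range (m % p), f j := by
  rcases p.eq_zero_or_pos with rfl | hp
  · simp
  induction m with
  | zero => simp
  | succ m ih =>
    rw [sum_range_succ, ih, ← sum_range_succ, ← Nat.mod_add_mod m p 1]
    by_cases hwrap : m % p + 1 = p
    · rw [hwrap, Nat.mod_self, hf, sum_range_zero]
    · rw [Nat.mod_eq_of_lt (a := m % p + 1) (by have := Nat.mod_lt m hp; omega)]

theorem lasso_of_lt (c : ℕ → ℤ) {k n : ℕ} (p : ℕ) (hn : n < k) : lasso c k p n = c n :=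
  if_pos hn

theorem lasso_add (c : ℕ → ℤ) (k p m : ℕ) : lasso c k p (k + m) = c (k + m % p) := by
  simp [lasso]

theorem sum_range_lasso_add (c : ℕ → ℤ) {k p : ℕ} (hblock : ∑ i ∈ Ico k (k + p), c i = 0)
    (m : ℕ) : ∑ i ∈ range (k + m), lasso c k p i = ∑ i ∈ range (k + m % p), c i := by
  rw [sum_Ico_eq_sum_range, Nat.add_sub_cancel_left] at hblock
  rw [sum_range_add, sum_range_add, sum_congr rfl fun i hi => lasso_of_lt c p (mem_range.mp hi)]
  simp only [lasso_add]
  rw [sum_range_mod_of_sum_range_eq_zero (fun j => c (k + j)) hblock]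

theorem lasso_no_zero_sums_general (c : ℕ → ℤ) (a b : ℕ) (hab : a < b)
    (hblock : ∑ i ∈ Finset.Ico a b, c i = 0)
    (hin : ∀ n : ℕ, a ≤ n → n ≤ b → (∑ i ∈ Finset.range n, c i) ≠ 0) :
    (∀ n : ℕ, a ≤ n → (∑ i ∈ Finset.range n, lasso c a (b - a) i) ≠ 0) ∧
    {n : ℕ | ∑ i ∈ Finset.range n, lasso c a (b - a) i = 0}.Finite := by
  obtain ⟨p, rfl⟩ := Nat.exists_eq_add_of_le hab.le
  rw [Nat.add_sub_cancel_left]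
  have hp : 0 < p := by omega
  have hnonzero (n : ℕ) (hn : a ≤ n) : ∑ i ∈ range n, lasso c a p i ≠ 0 := by
    obtain ⟨m, rfl⟩ := Nat.exists_eq_add_of_le hn
    rw [sum_range_lasso_add c hblock]
    exact hin _ (Nat.le_add_right a _) (by have := Nat.mod_lt m hp; omega)
  exact ⟨hnonzero, (Set.finite_Iio a).subset fun n hn => not_le.mp fun h => hnonzero n h hn⟩

/-- If the block `c_a … c_{b-1}` has total sum zero, the running sum of the
prefix `c_0 … c_{a-1}` is nonzero, and all running sums at positions
`a ≤ n ≤ b` are nonzero, then the sequence consisting of the prefix followed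
by the block repeated forever has no zero running sum at any position
`n ≥ a`; in particular only finitely many of its running sums are zero. -/
theorem lasso_no_zero_sums (c : ℕ → ℤ) (a b : ℕ) (hab : a < b)
    (hblock : ∑ i ∈ Finset.Ico a b, c i = 0)
    (hpref : (∑ i ∈ Finset.range a, c i) ≠ 0)
    (hin : ∀ n : ℕ, a ≤ n → n ≤ b → (∑ i ∈ Finset.range n, c i) ≠ 0) :
    (∀ n : ℕ, a ≤ n → (∑ i ∈ Finset.range n, lasso c a (b - a) i) ≠ 0) ∧
    {n : ℕ | ∑ i ∈ Finset.range n, lasso c a (b - a) i = 0}.Finite :=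
  lasso_no_zero_sums_general c a b hab hblock hin
end

section
/- In a finite non-blocking one-player arena with integer edge weights, if there is no reachable cycle of strictly positive total weight from state s and no play from s achieves running sum zero infinitely often, then every play from s is losing for the condition W₁ ∪ W₂ (running sums diverging to +∞, or running sum zero infinitely often); in particular if some play from s achieves liminf of running sums equal to +∞, then there is a reachable strictly positive cycle from s. -/
/-- A finite path of edges in the arena from `a` to `b`. -/
def isEPath {S : Type*} (E : Set (S × ℤ × S)) : S → List (S × ℤ × S) → S → Prop
  | a, [], b => a = b
  | a, e :: ρ, b => e ∈ E ∧ e.1 = a ∧ isEPath E e.2.2 ρ b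

/-- There is a cycle of strictly positive total weight reachable from `s`. -/
def posCycleFrom {S : Type*} (E : Set (S × ℤ × S)) (s : S) : Prop :=
  ∃ (t : S) (ρ σc : List (S × ℤ × S)),
    isEPath E s ρ t ∧ isEPath E t σc t ∧ σc ≠ [] ∧
    0 < (σc.map (fun e => e.2.1)).sum

section Segments

variable {S : Type*} {E : Set (S × ℤ × S)} {s : S} {π : ℕ → S × ℤ × S}

def playSegment (π : ℕ → S × ℤ × S) (m k : ℕ) : List (S × ℤ × S) :=
  (List.range' m k).map π

lemma playSegment_succ (π : ℕ → S × ℤ × S) (m k : ℕ) :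
    playSegment π m (k + 1) = π m :: playSegment π (m + 1) k := by
  simp only [playSegment, List.range'_succ, List.map_cons]

lemma isPlay.isEPath_playSegment (hπ : isPlay E s π) (m k : ℕ) :
    isEPath E (π m).1 (playSegment π m k) (π (m + k)).1 := by
  induction k generalizing m with
  | zero => rfl
  | succ k ih =>
    rw [playSegment_succ]
    refine ⟨(hπ.2 m).1, rfl, ?_⟩
    rw [← (hπ.2 m).2, show m + (k + 1) = m + 1 + k by omega]
    exact ih (m + 1)

lemma sum_weights_playSegment (π : ℕ → S × ℤ × S) (m k : ℕ) :
    ((playSegment π m k).map fun e => e.2.1).sum = rsum π (m + k) - rsum π m := by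
  induction k generalizing m with
  | zero => simp [playSegment]
  | succ k ih =>
    rw [playSegment_succ, List.map_cons, List.sum_cons, ih, show m + (k + 1) = m + 1 + k by omega]
    simp only [rsum, Finset.sum_range_succ]
    ring

lemma posCycleFrom_of_isPlay_of_revisit (hπ : isPlay E s π) {m n : ℕ} (hmn : m < n)
    (hstate : (π m).1 = (π n).1) (hgain : rsum π m < rsum π n) : posCycleFrom E s := by
  obtain ⟨k, rfl⟩ := Nat.exists_eq_add_of_lt hmn
  refine ⟨(π m).1, playSegment π 0 m, playSegment π m (k + 1), ?_, ?_, ?_, ?_⟩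
  · simpa [hπ.1] using hπ.isEPath_playSegment 0 m
  · simpa [← add_assoc, ← hstate] using hπ.isEPath_playSegment m (k + 1)
  · simp [playSegment_succ]
  · rw [sum_weights_playSegment, ← add_assoc]
    omega

end Segments

lemma posCycleFrom_of_isPlay_of_tendsto {S : Type*} [Finite S] {E : Set (S × ℤ × S)} {s : S}
    {π : ℕ → S × ℤ × S} (hπ : isPlay E s π)
    (htop : Filter.Tendsto (rsum π) Filter.atTop Filter.atTop) : posCycleFrom E s := by
  obtain ⟨t, ht⟩ := Finite.exists_infinite_fiber fun n => (π n).1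
  have hvisits : {n : ℕ | (π n).1 = t}.Infinite := Set.infinite_coe_iff.mp ht
  obtain ⟨m, hm, -⟩ := hvisits.exists_gt 0
  obtain ⟨N, hN⟩ := Filter.eventually_atTop.mp (htop.eventually_gt_atTop (rsum π m))
  obtain ⟨n, hn, hlt⟩ := hvisits.exists_gt (max m N)
  exact posCycleFrom_of_isPlay_of_revisit hπ (by omega) (hm.trans hn.symm) (hN n (by omega))

theorem losing_without_positive_cycle_general {S : Type*} [Finite S]
    (E : Set (S × ℤ × S)) (s : S) :
    ((¬ posCycleFrom E s) →
      (∀ π : ℕ → S × ℤ × S, isPlay E s π → ¬ {n : ℕ | rsum π n = 0}.Infinite) →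
      ∀ π : ℕ → S × ℤ × S, isPlay E s π →
        ¬ (Filter.Tendsto (rsum π) Filter.atTop Filter.atTop ∨
            {n : ℕ | rsum π n = 0}.Infinite)) ∧
    ((∃ π : ℕ → S × ℤ × S, isPlay E s π ∧
        Filter.Tendsto (rsum π) Filter.atTop Filter.atTop) →
      posCycleFrom E s) := by
  refine ⟨fun hnoCycle hnoZero π hπ hwin => ?_, fun ⟨π, hπ, htop⟩ => ?_⟩
  · rcases hwin with htop | hzero
    · exact hnoCycle (posCycleFrom_of_isPlay_of_tendsto hπ htop)
    · exact hnoZero π hπ hzero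
  · exact posCycleFrom_of_isPlay_of_tendsto hπ htop

/-- In a finite non-blocking one-player arena with integer weights: if no
strictly positive cycle is reachable from `s` and no play from `s` has running
sum zero infinitely often, then every play from `s` is losing for the
condition `W₁ ∪ W₂` (running sums diverging to `+∞`, or running sum zero
infinitely often); in particular, if some play from `s` has running sums with
liminf `+∞`, then a strictly positive cycle is reachable from `s`. -/
theorem losing_without_positive_cycle {S : Type*} [Finite S]
    (E : Set (S × ℤ × S)) (hE : E.Finite)
    (hnb : ∀ s : S, ∃ e ∈ E, e.1 = s) (s : S) :
    ((¬ posCycleFrom E s) →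
      (∀ π : ℕ → S × ℤ × S, isPlay E s π → ¬ {n : ℕ | rsum π n = 0}.Infinite) →
      ∀ π : ℕ → S × ℤ × S, isPlay E s π →
        ¬ (Filter.Tendsto (rsum π) Filter.atTop Filter.atTop ∨
            {n : ℕ | rsum π n = 0}.Infinite)) ∧
    ((∃ π : ℕ → S × ℤ × S, isPlay E s π ∧
        Filter.Tendsto (rsum π) Filter.atTop Filter.atTop) →
      posCycleFrom E s) :=
  losing_without_positive_cycle_general E s
end

section
/- Given a coaccessible NFA N recognizing a language K ⊆ C*, the set [K] of infinite words all of whose prefixes are prefixes of words in K equals the set of color sequences of infinite paths of N starting from initial states that are essential (i.e., admit some infinite path). In particular, [K] is nonempty iff N has an essential initial state. -/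
/-- A state of an NFA is essential if some infinite path starts from it. -/
def essential {C σ : Type*} (N : NFA C σ) (q : σ) : Prop :=
  ∃ (f : ℕ → σ) (g : ℕ → C), f 0 = q ∧ ∀ n : ℕ, f (n + 1) ∈ N.step (f n) (g n)

/-!
A word `x` lies in `[K]` iff every prefix of `x` is read along some run from an initial state
(by coaccessibility, a prefix is a prefix of an accepted word iff it reaches some state). The
partial runs following the first `n` letters of `x` form a decreasing sequence of closed subsets
of the compact space `σ^ℕ` (discrete `σ`, finite), so by Cantor's intersection theorem, i.e.
Kőnig's lemma, they have a common point: an infinite run labelled by `x`.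
-/

namespace NFA

variable {α σ : Type*} (M : NFA α σ)

section Runs

variable (x : ℕ → α)

def runsFor (S : Set σ) (n : ℕ) : Set (ℕ → σ) :=
  {f | f 0 ∈ S ∧ ∀ i < n, f (i + 1) ∈ M.step (f i) (x i)}

variable {M x}

theorem runsFor_succ_subset (S : Set σ) (n : ℕ) : M.runsFor x S (n + 1) ⊆ M.runsFor x S n :=
  fun _ hf => ⟨hf.1, fun i hi => hf.2 i (by omega)⟩

theorem mem_iInter_runsFor {S : Set σ} {f : ℕ → σ} :
    f ∈ ⋂ n, M.runsFor x S n ↔ f 0 ∈ S ∧ ∀ n, f (n + 1) ∈ M.step (f n) (x n) := by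
  simp only [Set.mem_iInter, runsFor, Set.mem_ofPred_eq]
  exact ⟨fun h => ⟨(h 0).1, fun n => (h (n + 1)).2 n n.lt_succ_self⟩,
    fun h n => ⟨h.1, fun i _ => h.2 i⟩⟩

theorem mem_evalFrom_ofFn_iff {S : Set σ} {n : ℕ} {q : σ} :
    q ∈ M.evalFrom S (List.ofFn fun i : Fin n => x i) ↔ ∃ f ∈ M.runsFor x S n, f n = q := by
  induction n generalizing q with
  | zero =>
    simp only [List.ofFn_zero, evalFrom_nil]
    exact ⟨fun hq => ⟨fun _ => q, ⟨hq, by simp⟩, rfl⟩, fun ⟨f, hf, hfq⟩ => hfq ▸ hf.1⟩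
  | succ n ih =>
    rw [List.ofFn_succ', List.concat_eq_append, evalFrom_append, evalFrom_singleton,
      mem_stepSet]
    constructor
    · rintro ⟨t, ht, hq⟩
      obtain ⟨f, hf, rfl⟩ := ih.1 ht
      refine ⟨Function.update f (n + 1) q, ⟨?_, fun i hi => ?_⟩, by simp⟩
      · simpa [Function.update_of_ne] using hf.1
      · rcases Nat.lt_succ_iff_lt_or_eq.1 hi with hi | rfl
        · rw [Function.update_of_ne (by omega), Function.update_of_ne (by omega)]
          exact hf.2 i hi
        · simpa using hq
    · rintro ⟨f, hf, rfl⟩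
      exact ⟨f n, ih.2 ⟨f, runsFor_succ_subset S n hf, rfl⟩, hf.2 n n.lt_succ_self⟩

theorem isClosed_runsFor [TopologicalSpace σ] [DiscreteTopology σ] (S : Set σ) (n : ℕ) :
    IsClosed (M.runsFor x S n) := by
  have hstep (i : ℕ) : IsClosed {f : ℕ → σ | f (i + 1) ∈ M.step (f i) (x i)} :=
    (isClosed_discrete {p : σ × σ | p.2 ∈ M.step p.1 (x i)}).preimage
      (f := fun f : ℕ → σ => (f i, f (i + 1))) (by fun_prop)
  simp only [runsFor, Set.ofPred_and, Set.ofPred_forall]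
  exact ((isClosed_discrete S).preimage (continuous_apply 0)).inter
    (isClosed_iInter fun i => isClosed_iInter fun _ => hstep i)

theorem nonempty_iInter_runsFor_iff [Finite σ] {S : Set σ} :
    (⋂ n, M.runsFor x S n).Nonempty ↔ ∀ n, (M.runsFor x S n).Nonempty := by
  refine ⟨fun ⟨f, hf⟩ n => ⟨f, Set.mem_iInter.1 hf n⟩, fun h => ?_⟩
  let _ : TopologicalSpace σ := ⊥
  have : DiscreteTopology σ := ⟨rfl⟩
  exact IsCompact.nonempty_iInter_of_sequence_nonempty_isCompact_isClosed _
    (runsFor_succ_subset S) h (isClosed_runsFor S 0).isCompact (isClosed_runsFor S)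

end Runs

theorem mem_prefs_accepts_iff
    (hco : ∀ q : σ, ∃ w : List α, (M.evalFrom {q} w ∩ M.accept).Nonempty) {p : List α} :
    p ∈ prefs (M.accepts : Set (List α)) ↔ (M.eval p).Nonempty := by
  constructor
  · rintro ⟨w, ⟨qf, -, hqf⟩, v, rfl⟩
    rw [eval, evalFrom_append, mem_evalFrom_iff_exists] at hqf
    obtain ⟨q, hq, -⟩ := hqf
    exact ⟨q, hq⟩
  · rintro ⟨q, hq⟩
    obtain ⟨v, qf, hqf, hacc⟩ := hco q
    refine ⟨p ++ v, ⟨qf, hacc, ?_⟩, List.prefix_append p v⟩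
    rw [eval, evalFrom_append, mem_evalFrom_iff_exists]
    exact ⟨q, hq, hqf⟩

theorem mem_pclos_accepts_iff [Finite σ]
    (hco : ∀ q : σ, ∃ w : List α, (M.evalFrom {q} w ∩ M.accept).Nonempty) {x : ℕ → α} :
    x ∈ pclos (M.accepts : Set (List α)) ↔
      ∃ f : ℕ → σ, f 0 ∈ M.start ∧ ∀ n, f (n + 1) ∈ M.step (f n) (x n) := by
  have hprefix (n : ℕ) : (List.ofFn fun i : Fin n => x i) ∈ prefs (M.accepts : Set (List α)) ↔
      (M.runsFor x M.start n).Nonempty := by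
    simp only [M.mem_prefs_accepts_iff hco, Set.Nonempty, eval, mem_evalFrom_ofFn_iff]
    exact ⟨fun ⟨_, f, hf, _⟩ => ⟨f, hf⟩, fun ⟨f, hf⟩ => ⟨f n, f, hf, rfl⟩⟩
  simp only [pclos, Set.mem_ofPred_eq, hprefix, ← nonempty_iInter_runsFor_iff]
  exact exists_congr fun f => mem_iInter_runsFor

end NFA

/-- For a coaccessible NFA `N` recognizing `K`, the set `[K]` of infinite
words all of whose prefixes are prefixes of words in `K` equals the set of
color sequences of infinite paths of `N` from initial states; in particular,
`[K]` is nonempty iff `N` has an essential initial state. -/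
theorem pclos_eq_infinite_paths {C σ : Type*} [Fintype σ] (N : NFA C σ)
    (hco : ∀ q : σ, ∃ w : List C, (N.evalFrom {q} w ∩ N.accept).Nonempty) :
    pclos (N.accepts : Set (List C)) =
      {w : ℕ → C | ∃ f : ℕ → σ, f 0 ∈ N.start ∧
        ∀ n : ℕ, f (n + 1) ∈ N.step (f n) (w n)} ∧
    ((pclos (N.accepts : Set (List C))).Nonempty ↔
      ∃ q ∈ N.start, essential N q) := by
  have hpaths : pclos (N.accepts : Set (List C)) =
      {w : ℕ → C | ∃ f : ℕ → σ, f 0 ∈ N.start ∧ ∀ n : ℕ, f (n + 1) ∈ N.step (f n) (w n)} :=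
    Set.ext fun _ => N.mem_pclos_accepts_iff hco
  refine ⟨hpaths, hpaths ▸ ⟨?_, ?_⟩⟩
  · rintro ⟨w, f, hf0, hf⟩
    exact ⟨f 0, hf0, f, w, rfl, hf⟩
  · rintro ⟨q, hq, f, w, rfl, hf⟩
    exact ⟨w, f, hq, hf⟩
end
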